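/- arXiv:0802.3308 — 5 statements merged into one kernel-verified Lean document; each statement's English description precedes it below -/
import Mathlib

section
/- Let k = (k₁,k₂,k₃) ∈ ℤ³ with k_h = (k₁,k₂) ≠ 0. Then the vector field N_k is divergence free on ℝ² × ℝ, its third component vanishes on the planes z = 0 and z = 1, and there exists a smooth function p : ℝ² × ℝ → ℂ such that e₃ × N_k(x_h,z) - i λ_k N_k(x_h,z) = ∇p(x_h,z) for all (x_h,z); that is, N_k is an eigenvector of the Coriolis penalization with eigenvalue i λ_k modulo a pressure gradient. -/
open Real

noncomputable def lamk (k1 k2 k3 : ℤ) : ℝ :=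
  -(Real.pi * (k3 : ℝ)) / Real.sqrt ((k1 : ℝ) ^ 2 + (k2 : ℝ) ^ 2 + Real.pi ^ 2 * (k3 : ℝ) ^ 2)

noncomputable def mfun (k1 k2 k3 : ℤ) : ℝ :=
  Real.sqrt ((k1 : ℝ) ^ 2 + (k2 : ℝ) ^ 2 + Real.pi ^ 2 * (k3 : ℝ) ^ 2)

noncomputable def khn (k1 k2 : ℤ) : ℝ := Real.sqrt ((k1 : ℝ) ^ 2 + (k2 : ℝ) ^ 2)

noncomputable def nc1 (k1 k2 k3 : ℤ) : ℂ :=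
  (Complex.I * (k2 : ℂ) + (k1 : ℂ) * ((lamk k1 k2 k3 : ℝ) : ℂ)) /
    ((2 * Real.pi * khn k1 k2 : ℝ) : ℂ)

noncomputable def nc2 (k1 k2 k3 : ℤ) : ℂ :=
  (-Complex.I * (k1 : ℂ) + (k2 : ℂ) * ((lamk k1 k2 k3 : ℝ) : ℂ)) /
    ((2 * Real.pi * khn k1 k2 : ℝ) : ℂ)

noncomputable def nc3 (k1 k2 k3 : ℤ) : ℂ :=
  Complex.I * ((khn k1 k2 : ℝ) : ℂ) / ((2 * Real.pi * mfun k1 k2 k3 : ℝ) : ℂ)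

/-- The first component of the eigenvector `N_k`. -/
noncomputable def Nv1 (k1 k2 k3 : ℤ) (x1 x2 z : ℝ) : ℂ :=
  Complex.exp (Complex.I * (((k1 : ℝ) * x1 + (k2 : ℝ) * x2 : ℝ) : ℂ)) * nc1 k1 k2 k3 *
    Complex.cos (((Real.pi * (k3 : ℝ) * z : ℝ)) : ℂ)

/-- The second component of the eigenvector `N_k`. -/
noncomputable def Nv2 (k1 k2 k3 : ℤ) (x1 x2 z : ℝ) : ℂ :=
  Complex.exp (Complex.I * (((k1 : ℝ) * x1 + (k2 : ℝ) * x2 : ℝ) : ℂ)) * nc2 k1 k2 k3 *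
    Complex.cos (((Real.pi * (k3 : ℝ) * z : ℝ)) : ℂ)

/-- The third component of the eigenvector `N_k`. -/
noncomputable def Nv3 (k1 k2 k3 : ℤ) (x1 x2 z : ℝ) : ℂ :=
  Complex.exp (Complex.I * (((k1 : ℝ) * x1 + (k2 : ℝ) * x2 : ℝ) : ℂ)) * nc3 k1 k2 k3 *
    Complex.sin (((Real.pi * (k3 : ℝ) * z : ℝ)) : ℂ)

/-! ### Auxiliary material -/

/-- The constant appearing in the pressure. -/
noncomputable def pcoef (k1 k2 k3 : ℤ) : ℝ :=
  (1 - lamk k1 k2 k3 ^ 2) / (2 * Real.pi * khn k1 k2)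

/-- Generic mode function with `cos` vertical profile. -/
noncomputable def modeC (k1 k2 k3 : ℤ) (co : ℂ) (x1 x2 z : ℝ) : ℂ :=
  Complex.exp (Complex.I * (((k1 : ℝ) * x1 + (k2 : ℝ) * x2 : ℝ) : ℂ)) * co *
    Complex.cos (((Real.pi * (k3 : ℝ) * z : ℝ)) : ℂ)

/-- Generic mode function with `sin` vertical profile. -/
noncomputable def modeS (k1 k2 k3 : ℤ) (co : ℂ) (x1 x2 z : ℝ) : ℂ :=
  Complex.exp (Complex.I * (((k1 : ℝ) * x1 + (k2 : ℝ) * x2 : ℝ) : ℂ)) * co *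
    Complex.sin (((Real.pi * (k3 : ℝ) * z : ℝ)) : ℂ)

lemma hasDerivAt_cexp_lin (a b : ℂ) (s : ℝ) :
    HasDerivAt (fun t : ℝ => Complex.exp (Complex.I * (a * t + b)))
      (Complex.I * a * Complex.exp (Complex.I * (a * s + b))) s := by
  have h : HasDerivAt (fun w : ℂ => Complex.exp (Complex.I * (a * w + b)))
      (Complex.exp (Complex.I * (a * (s : ℂ) + b)) * (Complex.I * (a * 1))) (s : ℂ) :=
    ((((hasDerivAt_id (s : ℂ)).const_mul a).add_const b).const_mul Complex.I).cexp
  have h2 := h.comp_ofReal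
  convert h2 using 1
  ring

lemma hasDerivAt_ccos_lin (a : ℂ) (s : ℝ) :
    HasDerivAt (fun t : ℝ => Complex.cos (a * t)) (-a * Complex.sin (a * s)) s := by
  have h : HasDerivAt (fun w : ℂ => Complex.cos (a * w))
      (-Complex.sin (a * (s : ℂ)) * (a * 1)) (s : ℂ) :=
    ((hasDerivAt_id (s : ℂ)).const_mul a).ccos
  have h2 := h.comp_ofReal
  convert h2 using 1
  ring

lemma hasDerivAt_csin_lin (a : ℂ) (s : ℝ) :
    HasDerivAt (fun t : ℝ => Complex.sin (a * t)) (a * Complex.cos (a * s)) s := by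
  have h : HasDerivAt (fun w : ℂ => Complex.sin (a * w))
      (Complex.cos (a * (s : ℂ)) * (a * 1)) (s : ℂ) :=
    ((hasDerivAt_id (s : ℂ)).const_mul a).csin
  have h2 := h.comp_ofReal
  convert h2 using 1
  ring

lemma deriv_modeC_x1 (k1 k2 k3 : ℤ) (co : ℂ) (x1 x2 z : ℝ) :
    deriv (fun s => modeC k1 k2 k3 co s x2 z) x1
      = Complex.I * (k1 : ℂ) * modeC k1 k2 k3 co x1 x2 z := by
  have hfe : (fun s => modeC k1 k2 k3 co s x2 z)
      = fun s : ℝ => Complex.exp (Complex.I * ((k1 : ℂ) * s + (k2 : ℂ) * (x2 : ℂ))) *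
          (co * Complex.cos (((Real.pi * (k3 : ℝ) * z : ℝ)) : ℂ)) := by
    funext s
    simp only [modeC]
    push_cast
    ring_nf
  rw [hfe]
  rw [((hasDerivAt_cexp_lin (k1 : ℂ) ((k2 : ℂ) * (x2 : ℂ)) x1).mul_const _).deriv]
  simp only [modeC]
  push_cast
  ring

lemma deriv_modeC_x2 (k1 k2 k3 : ℤ) (co : ℂ) (x1 x2 z : ℝ) :
    deriv (fun s => modeC k1 k2 k3 co x1 s z) x2
      = Complex.I * (k2 : ℂ) * modeC k1 k2 k3 co x1 x2 z := by
  have hfe : (fun s => modeC k1 k2 k3 co x1 s z)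
      = fun s : ℝ => Complex.exp (Complex.I * ((k2 : ℂ) * s + (k1 : ℂ) * (x1 : ℂ))) *
          (co * Complex.cos (((Real.pi * (k3 : ℝ) * z : ℝ)) : ℂ)) := by
    funext s
    simp only [modeC]
    push_cast
    ring_nf
  rw [hfe]
  rw [((hasDerivAt_cexp_lin (k2 : ℂ) ((k1 : ℂ) * (x1 : ℂ)) x2).mul_const _).deriv]
  simp only [modeC]
  push_cast
  ring_nf

lemma deriv_modeC_z (k1 k2 k3 : ℤ) (co : ℂ) (x1 x2 z : ℝ) :
    deriv (fun s => modeC k1 k2 k3 co x1 x2 s) z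
      = -((Real.pi : ℂ) * (k3 : ℂ)) * modeS k1 k2 k3 co x1 x2 z := by
  have hfe : (fun s => modeC k1 k2 k3 co x1 x2 s)
      = fun s : ℝ => (Complex.exp (Complex.I * (((k1 : ℝ) * x1 + (k2 : ℝ) * x2 : ℝ) : ℂ)) * co) *
          Complex.cos (((Real.pi : ℂ) * (k3 : ℂ)) * s) := by
    funext s
    simp only [modeC]
    push_cast
    ring_nf
  rw [hfe]
  rw [((hasDerivAt_ccos_lin ((Real.pi : ℂ) * (k3 : ℂ)) z).const_mul _).deriv]
  simp only [modeS]
  push_cast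
  ring

lemma deriv_modeS_z (k1 k2 k3 : ℤ) (co : ℂ) (x1 x2 z : ℝ) :
    deriv (fun s => modeS k1 k2 k3 co x1 x2 s) z
      = ((Real.pi : ℂ) * (k3 : ℂ)) * modeC k1 k2 k3 co x1 x2 z := by
  have hfe : (fun s => modeS k1 k2 k3 co x1 x2 s)
      = fun s : ℝ => (Complex.exp (Complex.I * (((k1 : ℝ) * x1 + (k2 : ℝ) * x2 : ℝ) : ℂ)) * co) *
          Complex.sin (((Real.pi : ℂ) * (k3 : ℂ)) * s) := by
    funext s
    simp only [modeS]
    push_cast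
    ring_nf
  rw [hfe]
  rw [((hasDerivAt_csin_lin ((Real.pi : ℂ) * (k3 : ℂ)) z).const_mul _).deriv]
  simp only [modeC]
  push_cast
  ring

lemma contDiff_modeC (k1 k2 k3 : ℤ) (co : ℂ) :
    ContDiff ℝ (⊤ : ℕ∞) (fun q : ℝ × ℝ × ℝ => modeC k1 k2 k3 co q.1 q.2.1 q.2.2) := by
  simp only [modeC]
  have hb : ContDiff ℝ (⊤ : ℕ∞) (fun q : ℝ × ℝ × ℝ => (k1 : ℝ) * q.1 + (k2 : ℝ) * q.2.1) := by
    apply ContDiff.add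
    · exact contDiff_const.mul contDiff_fst
    · exact contDiff_const.mul contDiff_snd.fst
  have hc : ContDiff ℝ (⊤ : ℕ∞) (fun q : ℝ × ℝ × ℝ => Real.pi * (k3 : ℝ) * q.2.2) :=
    contDiff_const.mul contDiff_snd.snd
  have h1 : ContDiff ℝ (⊤ : ℕ∞) (fun q : ℝ × ℝ × ℝ =>
      Complex.exp (Complex.I * (((k1 : ℝ) * q.1 + (k2 : ℝ) * q.2.1 : ℝ) : ℂ))) := by
    have he : ContDiff ℝ (⊤ : ℕ∞) (Complex.exp : ℂ → ℂ) := (Complex.contDiff_exp (𝕜 := ℂ)).restrict_scalars ℝ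
    exact he.comp (contDiff_const.mul (Complex.ofRealCLM.contDiff.comp hb))
  have h2 : ContDiff ℝ (⊤ : ℕ∞) (fun q : ℝ × ℝ × ℝ =>
      Complex.cos (((Real.pi * (k3 : ℝ) * q.2.2 : ℝ)) : ℂ)) := by
    have hcos : ContDiff ℝ (⊤ : ℕ∞) (Complex.cos : ℂ → ℂ) := Complex.contDiff_cos.restrict_scalars ℝ
    exact hcos.comp (Complex.ofRealCLM.contDiff.comp hc)
  exact (h1.mul contDiff_const).mul h2

section AlgebraicIdentities

variable (k1 k2 k3 : ℤ) (hk : (k1, k2) ≠ (0, 0))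
include hk

lemma khn_pos : 0 < khn k1 k2 := by
  apply Real.sqrt_pos.mpr
  have hne : ¬(k1 = 0 ∧ k2 = 0) := by
    intro h
    exact hk (by rw [h.1, h.2])
  rcases not_and_or.mp hne with h | h
  · have : (k1:ℝ) ≠ 0 := Int.cast_ne_zero.mpr h
    positivity
  · have : (k2:ℝ) ≠ 0 := Int.cast_ne_zero.mpr h
    positivity

lemma mfun_pos : 0 < mfun k1 k2 k3 := by
  apply Real.sqrt_pos.mpr
  have h1 : 0 < (k1:ℝ)^2 + (k2:ℝ)^2 := Real.sqrt_pos.mp (khn_pos k1 k2 hk)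
  positivity

lemma khn_sq : khn k1 k2 ^ 2 = (k1:ℝ)^2 + (k2:ℝ)^2 := by
  have h1 : 0 < (k1:ℝ)^2 + (k2:ℝ)^2 := Real.sqrt_pos.mp (khn_pos k1 k2 hk)
  exact Real.sq_sqrt h1.le

lemma mfun_sq : mfun k1 k2 k3 ^ 2 = (k1:ℝ)^2 + (k2:ℝ)^2 + Real.pi^2 * (k3:ℝ)^2 := by
  have h1 : 0 < (k1:ℝ)^2 + (k2:ℝ)^2 := Real.sqrt_pos.mp (khn_pos k1 k2 hk)
  apply Real.sq_sqrt; positivity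

lemma lamk_mul : lamk k1 k2 k3 * mfun k1 k2 k3 = -(Real.pi * (k3:ℝ)) := by
  have := mfun_pos k1 k2 k3 hk
  rw [lamk]
  exact div_mul_cancel₀ _ this.ne'

lemma halg0 : Complex.I * (k1:ℂ) * nc1 k1 k2 k3 + Complex.I * (k2:ℂ) * nc2 k1 k2 k3 +
    ((Real.pi:ℂ) * (k3:ℂ)) * nc3 k1 k2 k3 = 0 := by
  have hκ := khn_pos k1 k2 hk
  have hm := mfun_pos k1 k2 k3 hk
  have hκ2 : ((khn k1 k2 : ℝ):ℂ)^2 = (k1:ℂ)^2 + (k2:ℂ)^2 := by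
    exact_mod_cast congrArg (Complex.ofReal ·) (khn_sq k1 k2 hk)
  have hlm : ((lamk k1 k2 k3 : ℝ):ℂ) * ((mfun k1 k2 k3 : ℝ):ℂ) = -((Real.pi:ℂ) * (k3:ℂ)) := by
    exact_mod_cast congrArg (Complex.ofReal ·) (lamk_mul k1 k2 k3 hk)
  have hκ0 : ((khn k1 k2 : ℝ):ℂ) ≠ 0 := by exact_mod_cast hκ.ne'
  have hm0 : ((mfun k1 k2 k3 : ℝ):ℂ) ≠ 0 := by exact_mod_cast hm.ne'
  have hπ0 : ((Real.pi : ℝ):ℂ) ≠ 0 := by exact_mod_cast Real.pi_ne_zero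
  simp only [nc1, nc2, nc3]
  push_cast
  field_simp
  ring_nf
  linear_combination (-(1:ℂ) * Complex.I * ((lamk k1 k2 k3 : ℝ):ℂ) *
      ((mfun k1 k2 k3 : ℝ):ℂ)) * hκ2 +
    ((1:ℂ) * Complex.I * ((khn k1 k2 : ℝ):ℂ)^2) * hlm

lemma halg1 : -(nc2 k1 k2 k3) - Complex.I * ((lamk k1 k2 k3 : ℝ):ℂ) * nc1 k1 k2 k3
    = Complex.I * (k1:ℂ) * ((pcoef k1 k2 k3 : ℝ):ℂ) := by
  have hκ0 : ((khn k1 k2 : ℝ):ℂ) ≠ 0 := by exact_mod_cast (khn_pos k1 k2 hk).ne'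
  have hπ0 : ((Real.pi : ℝ):ℂ) ≠ 0 := by exact_mod_cast Real.pi_ne_zero
  simp only [nc1, nc2, pcoef]
  push_cast
  field_simp
  linear_combination (-(k2:ℂ) * ((lamk k1 k2 k3 : ℝ):ℂ)) * Complex.I_sq

lemma halg2 : nc1 k1 k2 k3 - Complex.I * ((lamk k1 k2 k3 : ℝ):ℂ) * nc2 k1 k2 k3
    = Complex.I * (k2:ℂ) * ((pcoef k1 k2 k3 : ℝ):ℂ) := by
  have hκ0 : ((khn k1 k2 : ℝ):ℂ) ≠ 0 := by exact_mod_cast (khn_pos k1 k2 hk).ne'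
  have hπ0 : ((Real.pi : ℝ):ℂ) ≠ 0 := by exact_mod_cast Real.pi_ne_zero
  simp only [nc1, nc2, pcoef]
  push_cast
  field_simp
  linear_combination ((k1:ℂ) * ((lamk k1 k2 k3 : ℝ):ℂ)) * Complex.I_sq

lemma halg3 : Complex.I * ((lamk k1 k2 k3 : ℝ):ℂ) * nc3 k1 k2 k3
    = ((Real.pi:ℂ) * (k3:ℂ)) * ((pcoef k1 k2 k3 : ℝ):ℂ) := by
  have hκ0 : ((khn k1 k2 : ℝ):ℂ) ≠ 0 := by exact_mod_cast (khn_pos k1 k2 hk).ne'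
  have hm0 : ((mfun k1 k2 k3 : ℝ):ℂ) ≠ 0 := by exact_mod_cast (mfun_pos k1 k2 k3 hk).ne'
  have hπ0 : ((Real.pi : ℝ):ℂ) ≠ 0 := by exact_mod_cast Real.pi_ne_zero
  have hκ2 : ((khn k1 k2 : ℝ):ℂ)^2 = (k1:ℂ)^2 + (k2:ℂ)^2 := by
    exact_mod_cast congrArg (Complex.ofReal ·) (khn_sq k1 k2 hk)
  have hm2 : ((mfun k1 k2 k3 : ℝ):ℂ)^2
      = (k1:ℂ)^2 + (k2:ℂ)^2 + (Real.pi:ℂ)^2 * (k3:ℂ)^2 := by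
    exact_mod_cast congrArg (Complex.ofReal ·) (mfun_sq k1 k2 k3 hk)
  have hlm : ((lamk k1 k2 k3 : ℝ):ℂ) * ((mfun k1 k2 k3 : ℝ):ℂ) = -((Real.pi:ℂ) * (k3:ℂ)) := by
    exact_mod_cast congrArg (Complex.ofReal ·) (lamk_mul k1 k2 k3 hk)
  simp only [nc3, pcoef]
  push_cast
  field_simp
  ring_nf
  linear_combination (((lamk k1 k2 k3 : ℝ):ℂ) * ((khn k1 k2 : ℝ):ℂ)^2) * Complex.I_sq
    + (-1 * ((lamk k1 k2 k3 : ℝ):ℂ)) * hκ2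
    + (((lamk k1 k2 k3 : ℝ):ℂ)) * hm2
    + ((Real.pi:ℂ) * (k3:ℂ) * ((lamk k1 k2 k3 : ℝ):ℂ) - ((mfun k1 k2 k3 : ℝ):ℂ)) * hlm

end AlgebraicIdentities

/-- `N_k` is divergence free, its third component vanishes on `z = 0` and `z = 1`, and it is an
eigenvector of the Coriolis penalization with eigenvalue `i λ_k` modulo a pressure gradient. -/
theorem coriolis_eigenvector (k1 k2 k3 : ℤ) (hk : (k1, k2) ≠ (0, 0)) :
    (∀ x1 x2 z : ℝ,
        deriv (fun s => Nv1 k1 k2 k3 s x2 z) x1 +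
          deriv (fun s => Nv2 k1 k2 k3 x1 s z) x2 +
          deriv (fun s => Nv3 k1 k2 k3 x1 x2 s) z = 0) ∧
    (∀ x1 x2 : ℝ, Nv3 k1 k2 k3 x1 x2 0 = 0 ∧ Nv3 k1 k2 k3 x1 x2 1 = 0) ∧
    (∃ p : ℝ → ℝ → ℝ → ℂ,
        ContDiff ℝ (⊤ : ℕ∞) (fun q : ℝ × ℝ × ℝ => p q.1 q.2.1 q.2.2) ∧
        ∀ x1 x2 z : ℝ,
          (-(Nv2 k1 k2 k3 x1 x2 z) -
              Complex.I * ((lamk k1 k2 k3 : ℝ) : ℂ) * Nv1 k1 k2 k3 x1 x2 z =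
            deriv (fun s => p s x2 z) x1) ∧
          (Nv1 k1 k2 k3 x1 x2 z -
              Complex.I * ((lamk k1 k2 k3 : ℝ) : ℂ) * Nv2 k1 k2 k3 x1 x2 z =
            deriv (fun s => p x1 s z) x2) ∧
          (-(Complex.I * ((lamk k1 k2 k3 : ℝ) : ℂ)) * Nv3 k1 k2 k3 x1 x2 z =
            deriv (fun s => p x1 x2 s) z)) := by
  refine ⟨?_, ?_, ?_⟩
  · -- divergence free
    intro x1 x2 z
    have d1 : deriv (fun s => Nv1 k1 k2 k3 s x2 z) x1
        = Complex.I * (k1 : ℂ) * modeC k1 k2 k3 (nc1 k1 k2 k3) x1 x2 z :=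
      deriv_modeC_x1 k1 k2 k3 _ x1 x2 z
    have d2 : deriv (fun s => Nv2 k1 k2 k3 x1 s z) x2
        = Complex.I * (k2 : ℂ) * modeC k1 k2 k3 (nc2 k1 k2 k3) x1 x2 z :=
      deriv_modeC_x2 k1 k2 k3 _ x1 x2 z
    have d3 : deriv (fun s => Nv3 k1 k2 k3 x1 x2 s) z
        = ((Real.pi : ℂ) * (k3 : ℂ)) * modeC k1 k2 k3 (nc3 k1 k2 k3) x1 x2 z :=
      deriv_modeS_z k1 k2 k3 _ x1 x2 z
    rw [d1, d2, d3]
    simp only [modeC]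
    linear_combination (Complex.exp (Complex.I * (((k1 : ℝ) * x1 + (k2 : ℝ) * x2 : ℝ) : ℂ)) *
      Complex.cos (((Real.pi * (k3 : ℝ) * z : ℝ)) : ℂ)) * halg0 k1 k2 k3 hk
  · -- boundary conditions
    intro x1 x2
    constructor
    · simp [Nv3]
    · have hs : Complex.sin ((Real.pi : ℂ) * (k3 : ℂ)) = 0 := by
        rw [show ((Real.pi : ℂ) * (k3 : ℂ)) = (((k3 : ℝ) * Real.pi : ℝ) : ℂ) by push_cast; ring]
        rw [← Complex.ofReal_sin, Real.sin_int_mul_pi k3, Complex.ofReal_zero]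
      simp [Nv3, hs]
  · -- eigenvector modulo pressure gradient
    refine ⟨modeC k1 k2 k3 ((pcoef k1 k2 k3 : ℝ) : ℂ), contDiff_modeC k1 k2 k3 _, ?_⟩
    intro x1 x2 z
    refine ⟨?_, ?_, ?_⟩
    · rw [deriv_modeC_x1]
      simp only [Nv1, Nv2, modeC]
      linear_combination (Complex.exp (Complex.I * (((k1 : ℝ) * x1 + (k2 : ℝ) * x2 : ℝ) : ℂ)) *
        Complex.cos (((Real.pi * (k3 : ℝ) * z : ℝ)) : ℂ)) * halg1 k1 k2 k3 hk
    · rw [deriv_modeC_x2]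
      simp only [Nv1, Nv2, modeC]
      linear_combination (Complex.exp (Complex.I * (((k1 : ℝ) * x1 + (k2 : ℝ) * x2 : ℝ) : ℂ)) *
        Complex.cos (((Real.pi * (k3 : ℝ) * z : ℝ)) : ℂ)) * halg2 k1 k2 k3 hk
    · rw [deriv_modeC_z]
      simp only [Nv3, modeS]
      linear_combination (-(Complex.exp (Complex.I * (((k1 : ℝ) * x1 + (k2 : ℝ) * x2 : ℝ) : ℂ)) *
        Complex.sin (((Real.pi * (k3 : ℝ) * z : ℝ)) : ℂ))) * halg3 k1 k2 k3 hk
end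

section
/- Fix k_h ∈ ℤ² with k_h ≠ 0. Then the function t ↦ -π t / √(|k_h|² + π² t²) is strictly decreasing on ℝ. Moreover there exists a universal constant c > 0 such that for all l₃, k₃ ∈ ℤ with k₃ ≠ l₃, setting l = (k_h, l₃) and k = (k_h, k₃), one has |λ_l - λ_k| ≥ c |k_h|² / (1 + |k_h|² + k₃²)^{3/2}; equivalently, |λ_l - λ_k|⁻¹ ≤ C (1+|k|)³ / |k_h|² for a universal constant C. -/
/-!
With `a = |k_h|² > 0` we have `λ_{(k_h,t)} = f(t) := -πt/√(a + π²t²)` and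
`f'(t) = -πa/(a + π²t²)^{3/2} < 0`. For integers `l₃ ≠ k₃`, monotonicity bounds `|f l₃ - f k₃|`
below by the drop of `f` over the unit step from `k₃` towards `l₃`, and by the mean value theorem
this drop is at least `πa/(a + π²x²)^{3/2}` for some `x` within `1` of `k₃`, where
`a + π²x² ≤ 2π²(1 + a + k₃²)`. The inverse bound then follows from `1 + |k|² ≤ (1 + |k|)²`.
-/

open Real

noncomputable def dispersion (a t : ℝ) : ℝ := -(π * t) / √(a + π ^ 2 * t ^ 2)

lemma dispersion_neg (a t : ℝ) : dispersion a (-t) = -dispersion a t := by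
  simp only [dispersion, neg_sq, mul_neg, neg_neg, neg_div]

section
variable {a : ℝ}

lemma hasDerivAt_dispersion (ha : 0 < a) (t : ℝ) :
    HasDerivAt (dispersion a) (-(π * a) / √(a + π ^ 2 * t ^ 2) ^ 3) t := by
  have hpos : 0 < a + π ^ 2 * t ^ 2 := by positivity
  have hnum : HasDerivAt (fun t => -(π * t)) (-π) t := by
    simpa using ((hasDerivAt_id t).const_mul π).fun_neg
  have hsqrt : HasDerivAt (fun t => √(a + π ^ 2 * t ^ 2)) (π ^ 2 * t / √(a + π ^ 2 * t ^ 2)) t := by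
    convert (((hasDerivAt_pow 2 t).const_mul (π ^ 2)).const_add a).sqrt hpos.ne' using 1
    norm_num
    field_simp
  refine (hnum.div hsqrt (sqrt_pos.2 hpos).ne').congr_deriv ?_
  have hsq : √(a + π ^ 2 * t ^ 2) ^ 2 = a + π ^ 2 * t ^ 2 := sq_sqrt hpos.le
  field_simp
  linear_combination -hsq

lemma dispersion_strictAnti (ha : 0 < a) : StrictAnti (dispersion a) :=
  strictAnti_of_hasDerivAt_neg (hasDerivAt_dispersion ha) fun t =>
    div_neg_of_neg_of_pos (by simp only [neg_lt_zero]; positivity) (by positivity)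

lemma div_le_dispersion_sub_dispersion_add_one (ha : 0 < a) (u : ℝ) :
    π * a / √(2 * π ^ 2 * (1 + a + u ^ 2)) ^ 3 ≤ dispersion a u - dispersion a (u + 1) := by
  have hderiv_le : ∀ x ∈ interior (Set.Icc u (u + 1)),
      deriv (dispersion a) x ≤ -(π * a / √(2 * π ^ 2 * (1 + a + u ^ 2)) ^ 3) := by
    intro x hx
    rw [interior_Icc] at hx
    have hx2 : x ^ 2 ≤ 2 * (1 + u ^ 2) := by
      nlinarith [mul_pos (sub_pos.2 hx.1) (sub_pos.2 hx.2), sq_nonneg (u - 1), sq_nonneg (u + 1)]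
    have hπ : 1 ≤ π ^ 2 := one_le_pow₀ (by linarith [pi_gt_three])
    have hbound : a + π ^ 2 * x ^ 2 ≤ 2 * π ^ 2 * (1 + a + u ^ 2) := by nlinarith
    rw [(hasDerivAt_dispersion ha x).deriv, neg_div, neg_le_neg_iff]
    gcongr
  have := (convex_Icc u (u + 1)).image_sub_le_mul_sub_of_deriv_le
    (fun x _ => (hasDerivAt_dispersion ha x).continuousAt.continuousWithinAt)
    (fun x _ => (hasDerivAt_dispersion ha x).differentiableAt.differentiableWithinAt)
    hderiv_le u (by simp) (u + 1) (by simp) (by linarith)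
  linarith

lemma div_le_abs_dispersion_sub (ha : 0 < a) {u v : ℝ} (huv : 1 ≤ |u - v|) :
    π * a / √(2 * π ^ 2 * (1 + a + v ^ 2)) ^ 3 ≤ |dispersion a u - dispersion a v| := by
  rcases le_abs'.1 huv with h | h
  · -- `dispersion a` is odd, so the step from `-v` to `-v + 1` does the job
    have hstep := div_le_dispersion_sub_dispersion_add_one ha (-v)
    have hmono := (dispersion_strictAnti ha).antitone (show -v + 1 ≤ -u by linarith)
    rw [neg_sq, dispersion_neg] at hstep
    rw [dispersion_neg] at hmono
    linarith [le_abs_self (dispersion a u - dispersion a v)]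
  · have hstep := div_le_dispersion_sub_dispersion_add_one ha v
    have hmono := (dispersion_strictAnti ha).antitone (show v + 1 ≤ u by linarith)
    linarith [neg_le_abs (dispersion a u - dispersion a v)]

end

lemma lamk_eq_dispersion (k1 k2 k3 : ℤ) :
    lamk k1 k2 k3 = dispersion ((k1 : ℝ) ^ 2 + (k2 : ℝ) ^ 2) k3 := rfl

lemma sq_add_sq_pos_of_ne {k1 k2 : ℤ} (hk : (k1, k2) ≠ (0, 0)) :
    0 < (k1 : ℝ) ^ 2 + (k2 : ℝ) ^ 2 := by
  obtain h | h : k1 ≠ 0 ∨ k2 ≠ 0 := by rw [← not_and_or]; simpa [Prod.ext_iff] using hk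
  · have : (k1 : ℝ) ≠ 0 := by exact_mod_cast h
    positivity
  · have : (k2 : ℝ) ≠ 0 := by exact_mod_cast h
    positivity

lemma one_add_rpow_three_halves_le (x : ℝ) (hx : 0 ≤ x) :
    (1 + x) ^ ((3 : ℝ) / 2) ≤ (1 + √x) ^ 3 := by
  rw [rpow_div_two_eq_sqrt _ (by positivity), show (3 : ℝ) = (3 : ℕ) by norm_num, rpow_natCast]
  gcongr
  rw [sqrt_le_iff]
  constructor
  · positivity
  · nlinarith [sq_sqrt hx, sqrt_nonneg x]

section
variable {k1 k2 l3 k3 : ℤ}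

lemma le_abs_lamk_sub (hk : (k1, k2) ≠ (0, 0)) (h : k3 ≠ l3) :
    π / √(2 * π ^ 2) ^ 3 * ((k1 : ℝ) ^ 2 + (k2 : ℝ) ^ 2) /
        (1 + ((k1 : ℝ) ^ 2 + (k2 : ℝ) ^ 2) + (k3 : ℝ) ^ 2) ^ ((3 : ℝ) / 2) ≤
      |lamk k1 k2 l3 - lamk k1 k2 k3| := by
  have ha := sq_add_sq_pos_of_ne hk
  have hdist : (1 : ℝ) ≤ |(l3 : ℝ) - k3| := by exact_mod_cast Int.one_le_abs (sub_ne_zero.2 h.symm)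
  rw [lamk_eq_dispersion, lamk_eq_dispersion]
  convert div_le_abs_dispersion_sub ha hdist using 1
  rw [rpow_div_two_eq_sqrt _ (by positivity), show (3 : ℝ) = (3 : ℕ) by norm_num, rpow_natCast,
    sqrt_mul (by positivity : (0 : ℝ) ≤ 2 * π ^ 2), mul_pow]
  field_simp

lemma abs_lamk_sub_inv_le (hk : (k1, k2) ≠ (0, 0)) (h : k3 ≠ l3) :
    |lamk k1 k2 l3 - lamk k1 k2 k3|⁻¹ ≤
      (π / √(2 * π ^ 2) ^ 3)⁻¹ * (1 + √((k1 : ℝ) ^ 2 + (k2 : ℝ) ^ 2 + (k3 : ℝ) ^ 2)) ^ 3 /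
        ((k1 : ℝ) ^ 2 + (k2 : ℝ) ^ 2) := by
  have ha := sq_add_sq_pos_of_ne hk
  calc |lamk k1 k2 l3 - lamk k1 k2 k3|⁻¹
      ≤ (π / √(2 * π ^ 2) ^ 3 * ((k1 : ℝ) ^ 2 + (k2 : ℝ) ^ 2) /
          (1 + ((k1 : ℝ) ^ 2 + (k2 : ℝ) ^ 2) + (k3 : ℝ) ^ 2) ^ ((3 : ℝ) / 2))⁻¹ :=
        inv_anti₀ (by positivity) (le_abs_lamk_sub hk h)
    _ = (π / √(2 * π ^ 2) ^ 3)⁻¹ *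
          (1 + ((k1 : ℝ) ^ 2 + (k2 : ℝ) ^ 2 + (k3 : ℝ) ^ 2)) ^ ((3 : ℝ) / 2) /
          ((k1 : ℝ) ^ 2 + (k2 : ℝ) ^ 2) := by
        rw [inv_div, add_assoc 1]
        field_simp
    _ ≤ _ := by
        gcongr
        exact one_add_rpow_three_halves_le _ (by positivity)

end

/-- For a fixed nonzero horizontal mode `k_h`, the dispersion function
`t ↦ -πt/√(|k_h|² + π²t²)` is strictly decreasing; consequently the eigenvalues
`λ_{(k_h,l₃)}` are pairwise distinct with a quantitative (universal) separation:
`|λ_l - λ_k| ≥ c |k_h|² / (1 + |k_h|² + k₃²)^{3/2}`, equivalently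
`|λ_l - λ_k|⁻¹ ≤ C (1+|k|)³ / |k_h|²`. -/
theorem lamk_separation :
    (∀ k1 k2 : ℤ, (k1, k2) ≠ (0, 0) →
      StrictAnti (fun t : ℝ =>
        -(Real.pi * t) / Real.sqrt ((k1 : ℝ) ^ 2 + (k2 : ℝ) ^ 2 + Real.pi ^ 2 * t ^ 2))) ∧
    (∃ c : ℝ, 0 < c ∧ ∀ k1 k2 l3 k3 : ℤ, (k1, k2) ≠ (0, 0) → k3 ≠ l3 →
      |lamk k1 k2 l3 - lamk k1 k2 k3| ≥
        c * ((k1 : ℝ) ^ 2 + (k2 : ℝ) ^ 2) /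
          (1 + ((k1 : ℝ) ^ 2 + (k2 : ℝ) ^ 2) + (k3 : ℝ) ^ 2) ^ ((3 : ℝ) / 2)) ∧
    (∃ C : ℝ, 0 < C ∧ ∀ k1 k2 l3 k3 : ℤ, (k1, k2) ≠ (0, 0) → k3 ≠ l3 →
      |lamk k1 k2 l3 - lamk k1 k2 k3|⁻¹ ≤
        C * (1 + Real.sqrt ((k1 : ℝ) ^ 2 + (k2 : ℝ) ^ 2 + (k3 : ℝ) ^ 2)) ^ 3 /
          ((k1 : ℝ) ^ 2 + (k2 : ℝ) ^ 2)) := by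
  have hc : 0 < π / √(2 * π ^ 2) ^ 3 := by positivity
  exact ⟨fun k1 k2 hk => dispersion_strictAnti (sq_add_sq_pos_of_ne hk),
    ⟨_, hc, fun _ _ _ _ hk h => le_abs_lamk_sub hk h⟩,
    ⟨_, inv_pos.2 hc, fun _ _ _ _ hk h => abs_lamk_sub_inv_le hk h⟩⟩
end

section
/- Let a ≥ 0, ε > 0, θ ∈ ℝ with θ ≠ 0, t ≥ 0, and let s : [0,t] → ℂ be continuously differentiable. Then |∫₀ᵗ s(u) e^{iθu/ε} e^{-a(t-u)} du| ≤ (ε/|θ|) [ |s(t)| + |s(0)| e^{-at} + ∫₀ᵗ (|s'(u)| + a|s(u)|) e^{-a(t-u)} du ]. -/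
open Real MeasureTheory intervalIntegral

/-! Write the integrand as `f(u) e^{iωu}` with `ω = θ/ε` and the damped amplitude
`f(u) = s(u) e^{-a(t-u)}`. Integrating by parts against the primitive `e^{iωu}/(iω)`, which has
modulus `1/|ω|`, bounds the integral by `(|f(t)| + |f(0)| + ∫₀ᵗ |f'|)/|ω|`, and
`|f'(u)| ≤ (|s'(u)| + a|s(u)|) e^{-a(t-u)}`. -/

lemma hasDerivAt_exp_I_mul_div {ω : ℝ} (hω : ω ≠ 0) (x : ℝ) :
    HasDerivAt (fun y : ℝ => Complex.exp (Complex.I * ω * y) / (Complex.I * ω))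
      (Complex.exp (Complex.I * ω * x)) x := by
  have hIω : Complex.I * ω ≠ 0 := mul_ne_zero Complex.I_ne_zero (by exact_mod_cast hω)
  refine ((((hasDerivAt_id' x).ofReal_comp).const_mul (Complex.I * ω)).cexp.div_const
    (Complex.I * ω)).congr_deriv ?_
  rw [Complex.ofReal_one, mul_one, mul_div_assoc, div_self hIω, mul_one]

lemma norm_exp_I_mul_div {ω : ℝ} (x : ℝ) :
    ‖Complex.exp (Complex.I * ω * x) / (Complex.I * ω)‖ = 1 / |ω| := by
  rw [norm_div, Complex.norm_exp]
  simp

theorem norm_integral_mul_exp_I_mul_le {f f' : ℝ → ℂ} {a b ω : ℝ} (hab : a ≤ b) (hω : ω ≠ 0)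
    (hf : ∀ x ∈ Set.Icc a b, HasDerivAt f (f' x) x) (hf' : IntervalIntegrable f' volume a b) :
    ‖∫ x in a..b, f x * Complex.exp (Complex.I * ω * x)‖ ≤
      (‖f b‖ + ‖f a‖ + ∫ x in a..b, ‖f' x‖) / |ω| := by
  set V : ℝ → ℂ := fun y => Complex.exp (Complex.I * ω * y) / (Complex.I * ω)
  have hV : ∀ x, ‖V x‖ = 1 / |ω| := norm_exp_I_mul_div
  have hIBP := intervalIntegral.integral_mul_deriv_eq_deriv_mul (u := f) (v := V)
    (fun x hx => hf x (by rwa [Set.uIcc_of_le hab] at hx))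
    (fun x _ => hasDerivAt_exp_I_mul_div hω x) hf'
    ((by fun_prop : Continuous fun y : ℝ => Complex.exp (Complex.I * ω * y)).intervalIntegrable
      a b)
  have hrest : ‖∫ x in a..b, f' x * V x‖ ≤ (∫ x in a..b, ‖f' x‖) / |ω| := by
    calc ‖∫ x in a..b, f' x * V x‖ ≤ ∫ x in a..b, ‖f' x * V x‖ :=
          norm_integral_le_integral_norm hab
      _ = (∫ x in a..b, ‖f' x‖) / |ω| := by
          simp only [norm_mul, hV, mul_one_div, intervalIntegral.integral_div]
  rw [hIBP]
  calc ‖f b * V b - f a * V a - ∫ x in a..b, f' x * V x‖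
      ≤ ‖f b * V b‖ + ‖f a * V a‖ + ‖∫ x in a..b, f' x * V x‖ :=
        (norm_sub_le _ _).trans (add_le_add_left (norm_sub_le _ _) _)
    _ ≤ ‖f b‖ / |ω| + ‖f a‖ / |ω| + (∫ x in a..b, ‖f' x‖) / |ω| := by
        simp only [norm_mul, hV, mul_one_div]
        gcongr
    _ = (‖f b‖ + ‖f a‖ + ∫ x in a..b, ‖f' x‖) / |ω| := by ring

lemma hasDerivAt_ofReal_exp_neg_mul_sub (a t x : ℝ) :
    HasDerivAt (fun u : ℝ => ((Real.exp (-a * (t - u)) : ℝ) : ℂ))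
      (a * ((Real.exp (-a * (t - x)) : ℝ) : ℂ)) x := by
  refine ((((hasDerivAt_id' x).const_sub t).const_mul (-a)).exp).ofReal_comp.congr_deriv ?_
  push_cast
  ring

lemma norm_deriv_mul_exp_damping_le {a : ℝ} (ha : 0 ≤ a) (t u : ℝ) (z z' : ℂ) :
    ‖z' * ((Real.exp (-a * (t - u)) : ℝ) : ℂ) + z * (a * ((Real.exp (-a * (t - u)) : ℝ) : ℂ))‖ ≤
      (‖z'‖ + a * ‖z‖) * Real.exp (-a * (t - u)) := by
  calc _ ≤ ‖z' * ((Real.exp (-a * (t - u)) : ℝ) : ℂ)‖ +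
          ‖z * (a * ((Real.exp (-a * (t - u)) : ℝ) : ℂ))‖ := norm_add_le _ _
    _ = (‖z'‖ + a * ‖z‖) * Real.exp (-a * (t - u)) := by
        simp only [norm_mul, Complex.norm_real, Real.norm_eq_abs, abs_of_nonneg ha,
          abs_of_pos (Real.exp_pos _)]
        ring

/-- Integration-by-parts (small divisor) estimate for a fast-oscillating integral against a
continuously differentiable amplitude `s` on `[0, t]` and an exponential damping `e^{-a(t-u)}`. -/
theorem oscillatory_integral_estimate
    (a ε θ t : ℝ) (ha : 0 ≤ a) (hε : 0 < ε) (hθ : θ ≠ 0) (ht : 0 ≤ t)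
    (s s' : ℝ → ℂ)
    (hs : ∀ u ∈ Set.Icc (0 : ℝ) t, HasDerivAt s (s' u) u)
    (hs' : ContinuousOn s' (Set.Icc (0 : ℝ) t)) :
    ‖∫ u in (0 : ℝ)..t,
        s u * Complex.exp (Complex.I * (θ : ℂ) * (u : ℂ) / (ε : ℂ)) *
          ((Real.exp (-a * (t - u)) : ℝ) : ℂ)‖ ≤
      (ε / |θ|) *
        (‖s t‖ + ‖s 0‖ * Real.exp (-a * t) +
          ∫ u in (0 : ℝ)..t, (‖s' u‖ + a * ‖s u‖) * Real.exp (-a * (t - u))) := by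
  set g : ℝ → ℂ := fun u => ((Real.exp (-a * (t - u)) : ℝ) : ℂ)
  have hsc : ContinuousOn s (Set.Icc 0 t) := fun u hu => (hs u hu).continuousAt.continuousWithinAt
  have hf : ∀ u ∈ Set.Icc 0 t, HasDerivAt (fun u => s u * g u) (s' u * g u + s u * (a * g u)) u :=
    fun u hu => (hs u hu).mul (hasDerivAt_ofReal_exp_neg_mul_sub a t u)
  have hf' : ContinuousOn (fun u => s' u * g u + s u * (a * g u)) (Set.Icc 0 t) :=
    (hs'.mul (by fun_prop)).add (hsc.mul (by fun_prop))
  have hbound : ContinuousOn (fun u => (‖s' u‖ + a * ‖s u‖) * Real.exp (-a * (t - u)))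
      (Set.Icc 0 t) := (hs'.norm.add (continuousOn_const.mul hsc.norm)).mul (by fun_prop)
  have hmain := norm_integral_mul_exp_I_mul_le (ω := θ / ε) ht (div_ne_zero hθ hε.ne') hf
    (hf'.intervalIntegrable_of_Icc ht)
  have hderiv : ∫ u in (0 : ℝ)..t, ‖s' u * g u + s u * (a * g u)‖ ≤
      ∫ u in (0 : ℝ)..t, (‖s' u‖ + a * ‖s u‖) * Real.exp (-a * (t - u)) :=
    integral_mono_on ht (hf'.norm.intervalIntegrable_of_Icc ht) (hbound.intervalIntegrable_of_Icc ht)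
      fun u _ => norm_deriv_mul_exp_damping_le ha t u (s u) (s' u)
  have hg : ∀ u, ‖g u‖ = Real.exp (-a * (t - u)) := fun u => by
    simp only [g, Complex.norm_real, Real.norm_eq_abs, abs_of_pos (Real.exp_pos _)]
  have hintegrand : ∀ u : ℝ, s u * Complex.exp (Complex.I * θ * u / ε) *
      ((Real.exp (-a * (t - u)) : ℝ) : ℂ) = s u * g u * Complex.exp (Complex.I * ↑(θ / ε) * u) :=
    fun u => by
      rw [mul_right_comm]
      congr 2
      push_cast
      ring
  simp only [hintegrand, norm_mul, hg, sub_self, sub_zero, mul_zero, Real.exp_zero, mul_one,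
    abs_div, abs_of_pos hε] at hmain ⊢
  calc _ ≤ _ := hmain
    _ ≤ (‖s t‖ + ‖s 0‖ * Real.exp (-a * t) +
          ∫ u in (0 : ℝ)..t, (‖s' u‖ + a * ‖s u‖) * Real.exp (-a * (t - u))) / (|θ| / ε) := by
        gcongr
    _ = _ := by rw [div_div_eq_mul_div]; ring
end

section
/- Let a ≥ 0, ε > 0, let F be a finite index set, let (θ_j)_{j∈F} be nonzero real numbers, let s_j : [0,∞) → ℂ be continuously differentiable for each j ∈ F, and let w : [0,∞) → ℂ be continuously differentiable and satisfy w'(t) + a w(t) = Σ_{j∈F} s_j(t) e^{iθ_j t/ε} for all t ≥ 0. Then for all t ≥ 0, |w(t)| ≤ |w(0)| e^{-at} + ε Σ_{j∈F} |θ_j|⁻¹ [ |s_j(t)| + |s_j(0)| e^{-at} + ∫₀ᵗ (|s_j'(u)| + a|s_j(u)|) e^{-a(t-u)} du ]. (Small divisor estimate: the response of a damped mode to non-resonant fast-oscillating forcing is of order ε.) -/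
/-!
Multiplying by the integrating factor `e^{au}` gives Duhamel's formula
`w t = e^{-at} w 0 + ∫₀ᵗ e^{-a(t-u)} f u du` for the forcing `f = w' + a w`. In each mode the
fast factor `e^{iωu}`, `ω = θ_j / ε`, has the antiderivative `e^{iωu} / (iω)` of modulus
`|ω|⁻¹ = ε |θ_j|⁻¹`, so one integration by parts against the slowly varying amplitude
`e^{-a(t-u)} s_j u` gains the factor `ε`.
-/

open Real MeasureTheory intervalIntegral Complex Set

theorem norm_integral_mul_cexp_I_mul_le {g g' : ℝ → ℂ} {a b ω : ℝ} (hab : a ≤ b) (hω : ω ≠ 0)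
    (hg : ∀ x ∈ Icc a b, HasDerivAt g (g' x) x) (hg' : IntervalIntegrable g' volume a b) :
    ‖∫ x in a..b, g x * cexp (I * ω * x)‖ ≤
      |ω|⁻¹ * (‖g b‖ + ‖g a‖ + ∫ x in a..b, ‖g' x‖) := by
  have hIω : I * ω ≠ 0 := mul_ne_zero I_ne_zero (ofReal_ne_zero.mpr hω)
  set v : ℝ → ℂ := fun x => cexp (I * ω * x) / (I * ω)
  have hv : ∀ x : ℝ, HasDerivAt v (cexp (I * ω * x)) x := fun x => by
    have := (((hasDerivAt_id (x : ℂ)).const_mul (I * ω)).cexp.div_const (I * ω)).comp_ofReal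
    simpa [hIω, v] using this
  have hv_norm : ∀ x : ℝ, ‖v x‖ = |ω|⁻¹ := fun x => by
    simp [v, norm_exp_I_mul_ofReal, mul_assoc, ← ofReal_mul]
  have hexp_int : IntervalIntegrable (fun x : ℝ => cexp (I * ω * x)) volume a b :=
    (by fun_prop : Continuous fun x : ℝ => cexp (I * ω * x)).intervalIntegrable _ _
  rw [intervalIntegral.integral_mul_deriv_eq_deriv_mul (by rwa [uIcc_of_le hab])
    (fun x _ => hv x) hg' hexp_int]
  calc ‖g b * v b - g a * v a - ∫ x in a..b, g' x * v x‖
      ≤ ‖g b * v b‖ + ‖g a * v a‖ + ‖∫ x in a..b, g' x * v x‖ :=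
        (norm_sub_le _ _).trans (by gcongr; exact norm_sub_le _ _)
    _ ≤ ‖g b * v b‖ + ‖g a * v a‖ + ∫ x in a..b, ‖g' x * v x‖ := by
      gcongr; exact norm_integral_le_integral_norm hab
    _ = |ω|⁻¹ * (‖g b‖ + ‖g a‖ + ∫ x in a..b, ‖g' x‖) := by
      simp only [norm_mul, hv_norm, intervalIntegral.integral_mul_const]; ring

theorem hasDerivAt_cexp_neg_mul_sub (a : ℂ) (t u : ℝ) :
    HasDerivAt (fun u : ℝ => cexp (-a * (t - u))) (cexp (-a * (t - u)) * a) u := by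
  simpa using (((hasDerivAt_id (u : ℂ)).const_sub (t : ℂ)).const_mul (-a)).cexp.comp_ofReal

theorem variation_of_constants {a : ℂ} {w w' f : ℝ → ℂ} {t : ℝ} (ht : 0 ≤ t)
    (hw : ∀ u ∈ Icc 0 t, HasDerivAt w (w' u) u) (hode : ∀ u ∈ Icc 0 t, w' u + a * w u = f u)
    (hf : IntervalIntegrable f volume 0 t) :
    w t = cexp (-a * t) * w 0 + ∫ u in 0..t, cexp (-a * (t - u)) * f u := by
  have hderiv : ∀ u ∈ uIcc 0 t,
      HasDerivAt (fun u : ℝ => cexp (-a * (t - u)) * w u) (cexp (-a * (t - u)) * f u) u := by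
    intro u hu
    rw [uIcc_of_le ht] at hu
    refine ((hasDerivAt_cexp_neg_mul_sub a t u).mul (hw u hu)).congr_deriv ?_
    rw [← hode u hu]; ring
  have hint : IntervalIntegrable (fun u : ℝ => cexp (-a * (t - u)) * f u) volume 0 t :=
    hf.continuousOn_mul (by fun_prop)
  rw [integral_eq_sub_of_hasDerivAt hderiv hint]
  simp

theorem norm_integral_damped_oscillatory_le {a ω t : ℝ} {s s' : ℝ → ℂ} (ha : 0 ≤ a) (hω : ω ≠ 0)
    (ht : 0 ≤ t) (hs : ∀ u ∈ Icc 0 t, HasDerivAt s (s' u) u)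
    (hs' : IntervalIntegrable s' volume 0 t) :
    ‖∫ u in 0..t, cexp (-a * (t - u)) * (s u * cexp (I * ω * u))‖ ≤
      |ω|⁻¹ * (‖s t‖ + ‖s 0‖ * Real.exp (-a * t) +
        ∫ u in 0..t, (‖s' u‖ + a * ‖s u‖) * Real.exp (-a * (t - u))) := by
  have hkernel_norm : ∀ u : ℝ, ‖cexp (-a * (t - u))‖ = Real.exp (-a * (t - u)) := fun u => by
    simp [Complex.norm_exp]
  have hs_cont : ContinuousOn s (Icc 0 t) := fun u hu => (hs u hu).continuousAt.continuousWithinAt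
  set g' : ℝ → ℂ := fun u => cexp (-a * (t - u)) * (a * s u + s' u)
  have hg : ∀ u ∈ Icc 0 t, HasDerivAt (fun u : ℝ => cexp (-a * (t - u)) * s u) (g' u) u :=
    fun u hu => ((hasDerivAt_cexp_neg_mul_sub a t u).mul (hs u hu)).congr_deriv (by ring)
  have hs_int : IntervalIntegrable s volume 0 t := hs_cont.intervalIntegrable_of_Icc ht
  have hg'_int : IntervalIntegrable g' volume 0 t :=
    ((hs_int.const_mul _).add hs').continuousOn_mul (by fun_prop)
  have hmajorant_int : IntervalIntegrable
      (fun u => (‖s' u‖ + a * ‖s u‖) * Real.exp (-a * (t - u))) volume 0 t :=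
    (hs'.norm.add (hs_int.norm.const_mul a)).mul_continuousOn (by fun_prop)
  have hg'_le : ∀ u ∈ Icc 0 t, ‖g' u‖ ≤ (‖s' u‖ + a * ‖s u‖) * Real.exp (-a * (t - u)) := by
    intro u _
    calc ‖g' u‖ ≤ Real.exp (-a * (t - u)) * (a * ‖s u‖ + ‖s' u‖) := by
          rw [norm_mul, hkernel_norm]
          gcongr
          refine (norm_add_le _ _).trans_eq ?_
          rw [norm_mul, norm_real, Real.norm_of_nonneg ha]
      _ = _ := by ring
  calc _ = ‖∫ u in 0..t, cexp (-a * (t - u)) * s u * cexp (I * ω * u)‖ := by simp only [mul_assoc]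
    _ ≤ |ω|⁻¹ * (‖cexp (-a * (t - t)) * s t‖ + ‖cexp (-a * (t - 0)) * s 0‖ +
          ∫ u in 0..t, ‖g' u‖) := norm_integral_mul_cexp_I_mul_le ht hω hg hg'_int
    _ = |ω|⁻¹ * (‖s t‖ + ‖s 0‖ * Real.exp (-a * t) + ∫ u in 0..t, ‖g' u‖) := by
      simp [Complex.norm_exp, mul_comm]
    _ ≤ _ := by
      gcongr
      exact integral_mono_on ht hg'_int.norm hmajorant_int hg'_le

/-- Small divisor estimate: the response of a damped mode to non-resonant fast-oscillating
forcing is of order `ε`. -/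
theorem small_divisor_ode_estimate
    (a ε : ℝ) (ha : 0 ≤ a) (hε : 0 < ε)
    (ι : Type) (F : Finset ι) (θ : ι → ℝ) (hθ : ∀ j ∈ F, θ j ≠ 0)
    (s s' : ι → ℝ → ℂ)
    (hs : ∀ j ∈ F, ∀ u : ℝ, 0 ≤ u → HasDerivAt (s j) (s' j u) u)
    (hs' : ∀ j ∈ F, ContinuousOn (s' j) (Set.Ici (0 : ℝ)))
    (w w' : ℝ → ℂ)
    (hw : ∀ t : ℝ, 0 ≤ t → HasDerivAt w (w' t) t)
    (hode : ∀ t : ℝ, 0 ≤ t →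
      w' t + (a : ℂ) * w t =
        ∑ j ∈ F, s j t * Complex.exp (Complex.I * (θ j : ℂ) * (t : ℂ) / (ε : ℂ))) :
    ∀ t : ℝ, 0 ≤ t →
      ‖w t‖ ≤ ‖w 0‖ * Real.exp (-a * t) +
        ε * ∑ j ∈ F, |θ j|⁻¹ *
          (‖s j t‖ + ‖s j 0‖ * Real.exp (-a * t) +
            ∫ u in (0 : ℝ)..t, (‖s' j u‖ + a * ‖s j u‖) * Real.exp (-a * (t - u))) := by
  intro t ht
  have hfreq : ∀ j (u : ℝ), cexp (I * θ j * u / ε) = cexp (I * ↑(θ j / ε) * u) := by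
    intro j u; push_cast; ring_nf
  simp_rw [hfreq] at hode
  have hmode_cont : ∀ j ∈ F, ContinuousOn (fun u : ℝ => s j u * cexp (I * ↑(θ j / ε) * u))
      (Icc 0 t) := fun j hj =>
    ContinuousOn.mul (fun u hu => (hs j hj u hu.1).continuousAt.continuousWithinAt) (by fun_prop)
  have hmode_int : ∀ j ∈ F, IntervalIntegrable
      (fun u : ℝ => cexp (-a * (t - u)) * (s j u * cexp (I * ↑(θ j / ε) * u))) volume 0 t :=
    fun j hj => ((hmode_cont j hj).intervalIntegrable_of_Icc ht).continuousOn_mul (by fun_prop)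
  rw [variation_of_constants ht (fun u hu => hw u hu.1) (fun u hu => hode u hu.1)
    ((continuousOn_finsetSum F hmode_cont).intervalIntegrable_of_Icc ht)]
  simp_rw [Finset.mul_sum]
  rw [intervalIntegral.integral_finsetSum hmode_int]
  calc _ ≤ ‖w 0‖ * Real.exp (-a * t) +
        ∑ j ∈ F, ‖∫ u in 0..t, cexp (-a * (t - u)) * (s j u * cexp (I * ↑(θ j / ε) * u))‖ := by
        refine (norm_add_le _ _).trans ?_
        gcongr
        · simp [Complex.norm_exp, mul_comm]
        · exact norm_sum_le _ _
    _ ≤ ‖w 0‖ * Real.exp (-a * t) + ∑ j ∈ F, |θ j / ε|⁻¹ *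
          (‖s j t‖ + ‖s j 0‖ * Real.exp (-a * t) +
            ∫ u in (0 : ℝ)..t, (‖s' j u‖ + a * ‖s j u‖) * Real.exp (-a * (t - u))) := by
        gcongr with j hj
        exact norm_integral_damped_oscillatory_le ha (div_ne_zero (hθ j hj) hε.ne') ht
          (fun u hu => hs j hj u hu.1)
          (((hs' j hj).mono Icc_subset_Ici_self).intervalIntegrable_of_Icc ht)
    _ = _ := by
        congr 1
        refine Finset.sum_congr rfl fun j _ => ?_
        rw [abs_div, abs_of_pos hε, inv_div]
        ring
end

section
/- Let ε, ν > 0, μ ∈ ℝ, k_h = (k₁,k₂) ∈ ℤ², and λ ∈ ℂ with Re λ > 0 and λ² ≠ εν|k_h|². Let w = (w₁,w₂) ∈ ℂ² satisfy the system: iμw₁ - λ²w₁ + ε|k_h|²w₁ - w₂ + εν(k₁k₂w₁ - k₁²w₂)/(λ² - εν|k_h|²) = 0 and iμw₂ - λ²w₂ + ε|k_h|²w₂ + w₁ + εν(-k₁k₂w₂ + k₂²w₁)/(λ² - εν|k_h|²) = 0. Define W(t,x_h,z) = (w₁, w₂, (√(εν)/λ) i k_h·w) e^{i k_h·x_h}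 e^{iμt/ε} e^{-λz/√(εν)}. Then W is divergence free, and there exists p̂ ∈ ℂ such that, with p(t,x_h,z) = p̂ e^{i k_h·x_h} e^{iμt/ε} e^{-λz/√(εν)}, one has ∂_t W + (1/ε) e₃ × W + ∇p - Δ_h W - ν ∂²_{zz} W = 0 on ℝ × ℝ² × ℝ. (The exponential boundary-layer ansatz gives exact solutions of the linearized rotating fluid equations.) -/
/-!
Each derivative of the profile `BLE` multiplies it by a constant (`iμ/ε` in `t`, `i k_j` in
`x_j`, `-λ/√(εν)` in `z`), so every equation reduces to an algebraic identity between the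
amplitudes, the equation's symbol. Divergence-freeness is built into the third amplitude. With
`p̂ = -iν (k₂w₁ - k₁w₂) / (λ² - εν|k_h|²)` the term `iεk_j p̂` is exactly the `εν`-term of the
`j`-th amplitude equation, so the horizontal equations are those equations divided by `ε`. For
the vertical one, `k₁` times the first plus `k₂` times the second amplitude equation gives
`ν (k_h·w)(iμ + ε|k_h|² - λ²) = -iλ² p̂`, which is what it asks for once `√(εν)² = εν`.
-/

open Real

/-- The oscillating exponential profile `e^{i k_h·x_h} e^{iμt/ε} e^{-λ z/√(εν)}` of a
boundary layer at the bottom. -/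
noncomputable def BLE (ε ν μ : ℝ) (k1 k2 : ℤ) (lam : ℂ) (t x1 x2 z : ℝ) : ℂ :=
  Complex.exp (Complex.I * (((k1 : ℝ) * x1 + (k2 : ℝ) * x2 : ℝ) : ℂ)) *
    Complex.exp (Complex.I * (μ : ℂ) * (t : ℂ) / (ε : ℂ)) *
    Complex.exp (-lam * (z : ℂ) / ((Real.sqrt (ε * ν) : ℝ) : ℂ))

/-- First component of the boundary-layer profile `W`. -/
noncomputable def Wbl1 (ε ν μ : ℝ) (k1 k2 : ℤ) (lam w1 w2 : ℂ) (t x1 x2 z : ℝ) : ℂ :=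
  w1 * BLE ε ν μ k1 k2 lam t x1 x2 z

/-- Second component of the boundary-layer profile `W`. -/
noncomputable def Wbl2 (ε ν μ : ℝ) (k1 k2 : ℤ) (lam w1 w2 : ℂ) (t x1 x2 z : ℝ) : ℂ :=
  w2 * BLE ε ν μ k1 k2 lam t x1 x2 z

/-- Third component of the boundary-layer profile `W`. -/
noncomputable def Wbl3 (ε ν μ : ℝ) (k1 k2 : ℤ) (lam w1 w2 : ℂ) (t x1 x2 z : ℝ) : ℂ :=
  (((Real.sqrt (ε * ν) : ℝ) : ℂ) / lam) * Complex.I * ((k1 : ℂ) * w1 + (k2 : ℂ) * w2) *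
    BLE ε ν μ k1 k2 lam t x1 x2 z


open Complex

lemma deriv_const_mul_cexp_of_affine {φ : ℝ → ℂ} {a : ℂ} (hφ : ∀ s : ℝ, φ s = a * s + φ 0)
    (c : ℂ) : deriv (fun s => c * cexp (φ s)) = fun s => a * c * cexp (φ s) := by
  funext x
  have hφ' : HasDerivAt φ a x := by
    rw [funext hφ]
    simpa using ((hasDerivAt_id x).ofReal_comp.const_mul a).add_const (φ 0)
  rw [(hφ'.cexp.const_mul c).deriv]
  ring

section Profile

variable (ε ν μ : ℝ) (k1 k2 : ℤ) (lam c : ℂ) (t x1 x2 z : ℝ)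

lemma BLE_eq_cexp : BLE ε ν μ k1 k2 lam t x1 x2 z =
    cexp (I * k1 * x1 + I * k2 * x2 + I * μ / ε * t - lam / √(ε * ν) * z) := by
  simp only [BLE, ← Complex.exp_add]
  push_cast
  ring_nf

lemma deriv_const_mul_BLE_t :
    deriv (fun s => c * BLE ε ν μ k1 k2 lam s x1 x2 z) =
      fun s => I * μ / ε * c * BLE ε ν μ k1 k2 lam s x1 x2 z := by
  simp only [BLE_eq_cexp]
  exact deriv_const_mul_cexp_of_affine (fun s => by push_cast; ring) c

lemma deriv_const_mul_BLE_x1 :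
    deriv (fun s => c * BLE ε ν μ k1 k2 lam t s x2 z) =
      fun s => I * k1 * c * BLE ε ν μ k1 k2 lam t s x2 z := by
  simp only [BLE_eq_cexp]
  exact deriv_const_mul_cexp_of_affine (fun s => by push_cast; ring) c

lemma deriv_const_mul_BLE_x2 :
    deriv (fun s => c * BLE ε ν μ k1 k2 lam t x1 s z) =
      fun s => I * k2 * c * BLE ε ν μ k1 k2 lam t x1 s z := by
  simp only [BLE_eq_cexp]
  exact deriv_const_mul_cexp_of_affine (fun s => by push_cast; ring) c

lemma deriv_const_mul_BLE_z :
    deriv (fun s => c * BLE ε ν μ k1 k2 lam t x1 x2 s) =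
      fun s => -(lam / √(ε * ν)) * c * BLE ε ν μ k1 k2 lam t x1 x2 s := by
  simp only [BLE_eq_cexp]
  exact deriv_const_mul_cexp_of_affine (fun s => by push_cast; ring) c

end Profile

section Symbol

variable {ε ν μ σ lam k1 k2 w1 w2 p : ℂ}

noncomputable def blPressure (ε ν k1 k2 lam w1 w2 : ℂ) : ℂ :=
  -I * ν * (k2 * w1 - k1 * w2) / (lam ^ 2 - ε * ν * (k1 ^ 2 + k2 ^ 2))

lemma I_mul_blPressure_fst :
    I * ε * k1 * blPressure ε ν k1 k2 lam w1 w2 =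
      ε * ν * (k1 * k2 * w1 - k1 ^ 2 * w2) / (lam ^ 2 - ε * ν * (k1 ^ 2 + k2 ^ 2)) := by
  rw [blPressure]
  linear_combination -(ε * ν * k1 * (k2 * w1 - k1 * w2) /
    (lam ^ 2 - ε * ν * (k1 ^ 2 + k2 ^ 2))) * I_sq

lemma I_mul_blPressure_snd :
    I * ε * k2 * blPressure ε ν k1 k2 lam w1 w2 =
      ε * ν * (-(k1 * k2) * w2 + k2 ^ 2 * w1) / (lam ^ 2 - ε * ν * (k1 ^ 2 + k2 ^ 2)) := by
  rw [blPressure]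
  linear_combination -(ε * ν * k2 * (k2 * w1 - k1 * w2) /
    (lam ^ 2 - ε * ν * (k1 ^ 2 + k2 ^ 2))) * I_sq

lemma mul_sub_eq_I_mul_blPressure (hD : lam ^ 2 - ε * ν * (k1 ^ 2 + k2 ^ 2) ≠ 0) :
    ν * (k2 * w1 - k1 * w2) =
      I * blPressure ε ν k1 k2 lam w1 w2 * (lam ^ 2 - ε * ν * (k1 ^ 2 + k2 ^ 2)) := by
  rw [blPressure, mul_assoc, div_mul_cancel₀ _ hD]
  linear_combination ν * (k2 * w1 - k1 * w2) * I_sq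

lemma mul_neg_div_sq_eq_div (hσ : σ ≠ 0) (hσ2 : σ ^ 2 = ε * ν) :
    ν * (-(lam / σ)) ^ 2 = lam ^ 2 / ε := by
  have hε : ε ≠ 0 := left_ne_zero_of_mul (hσ2 ▸ pow_ne_zero 2 hσ)
  have hν : ν ≠ 0 := right_ne_zero_of_mul (hσ2 ▸ pow_ne_zero 2 hσ)
  rw [neg_sq, div_pow, hσ2]
  field_simp

lemma div_symbol_eq_zero (hσ : σ ≠ 0) (hlam : lam ≠ 0) :
    I * k1 * w1 + I * k2 * w2 + -(lam / σ) * (σ / lam * I * (k1 * w1 + k2 * w2)) = 0 := by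
  field_simp
  ring

lemma momentum_symbol_fst_eq_zero (hσ : σ ≠ 0) (hσ2 : σ ^ 2 = ε * ν)
    (h1 : I * μ * w1 - lam ^ 2 * w1 + ε * (k1 ^ 2 + k2 ^ 2) * w1 - w2 + I * ε * k1 * p = 0) :
    I * μ / ε * w1 + 1 / ε * -w2 + I * k1 * p - ((I * k1) ^ 2 + (I * k2) ^ 2) * w1 -
      ν * (-(lam / σ)) ^ 2 * w1 = 0 := by
  have hε : ε ≠ 0 := left_ne_zero_of_mul (hσ2 ▸ pow_ne_zero 2 hσ)
  rw [mul_neg_div_sq_eq_div hσ hσ2]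
  field_simp
  linear_combination h1 - ε * (k1 ^ 2 + k2 ^ 2) * w1 * I_sq

lemma momentum_symbol_snd_eq_zero (hσ : σ ≠ 0) (hσ2 : σ ^ 2 = ε * ν)
    (h2 : I * μ * w2 - lam ^ 2 * w2 + ε * (k1 ^ 2 + k2 ^ 2) * w2 + w1 + I * ε * k2 * p = 0) :
    I * μ / ε * w2 + 1 / ε * w1 + I * k2 * p - ((I * k1) ^ 2 + (I * k2) ^ 2) * w2 -
      ν * (-(lam / σ)) ^ 2 * w2 = 0 := by
  have hε : ε ≠ 0 := left_ne_zero_of_mul (hσ2 ▸ pow_ne_zero 2 hσ)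
  rw [mul_neg_div_sq_eq_div hσ hσ2]
  field_simp
  linear_combination h2 - ε * (k1 ^ 2 + k2 ^ 2) * w2 * I_sq

lemma momentum_symbol_vert_eq_zero (hσ : σ ≠ 0) (hσ2 : σ ^ 2 = ε * ν) (hlam : lam ≠ 0)
    (h1 : I * μ * w1 - lam ^ 2 * w1 + ε * (k1 ^ 2 + k2 ^ 2) * w1 - w2 + I * ε * k1 * p = 0)
    (h2 : I * μ * w2 - lam ^ 2 * w2 + ε * (k1 ^ 2 + k2 ^ 2) * w2 + w1 + I * ε * k2 * p = 0)
    (hp : ν * (k2 * w1 - k1 * w2) = I * p * (lam ^ 2 - ε * ν * (k1 ^ 2 + k2 ^ 2))) :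
    I * μ / ε * (σ / lam * I * (k1 * w1 + k2 * w2)) + -(lam / σ) * p -
      ((I * k1) ^ 2 + (I * k2) ^ 2) * (σ / lam * I * (k1 * w1 + k2 * w2)) -
      ν * (-(lam / σ)) ^ 2 * (σ / lam * I * (k1 * w1 + k2 * w2)) = 0 := by
  have hε : ε ≠ 0 := left_ne_zero_of_mul (hσ2 ▸ pow_ne_zero 2 hσ)
  have hvert : ν * (k1 * w1 + k2 * w2) * (I * μ + ε * (k1 ^ 2 + k2 ^ 2) - lam ^ 2) =
      -I * lam ^ 2 * p := by
    linear_combination ν * (k1 * h1 + k2 * h2) - hp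
  rw [mul_neg_div_sq_eq_div hσ hσ2]
  field_simp
  linear_combination I * ε * hvert +
    I * (k1 * w1 + k2 * w2) * (I * μ + ε * (k1 ^ 2 + k2 ^ 2) - lam ^ 2) * hσ2 -
    ε * (lam ^ 2 * p + I * σ ^ 2 * (k1 * w1 + k2 * w2) * (k1 ^ 2 + k2 ^ 2)) * I_sq

end Symbol

/-- The exponential boundary-layer ansatz gives exact solutions of the linearized rotating
fluid equations: `W` is divergence free, and solves
`∂_t W + (1/ε) e₃ × W + ∇p - Δ_h W - ν ∂²_{zz} W = 0` for a suitable pressure. -/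
theorem boundary_layer_exact_solution
    (ε ν μ : ℝ) (hε : 0 < ε) (hν : 0 < ν) (k1 k2 : ℤ) (lam : ℂ)
    (hlam : 0 < lam.re)
    (hlam2 : lam ^ 2 ≠ ((ε * ν : ℝ) : ℂ) * ((k1 : ℂ) ^ 2 + (k2 : ℂ) ^ 2))
    (w1 w2 : ℂ)
    (hw1 : Complex.I * (μ : ℂ) * w1 - lam ^ 2 * w1 +
        (ε : ℂ) * ((k1 : ℂ) ^ 2 + (k2 : ℂ) ^ 2) * w1 - w2 +
        ((ε * ν : ℝ) : ℂ) * ((k1 : ℂ) * (k2 : ℂ) * w1 - (k1 : ℂ) ^ 2 * w2) /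
          (lam ^ 2 - ((ε * ν : ℝ) : ℂ) * ((k1 : ℂ) ^ 2 + (k2 : ℂ) ^ 2)) = 0)
    (hw2 : Complex.I * (μ : ℂ) * w2 - lam ^ 2 * w2 +
        (ε : ℂ) * ((k1 : ℂ) ^ 2 + (k2 : ℂ) ^ 2) * w2 + w1 +
        ((ε * ν : ℝ) : ℂ) * (-((k1 : ℂ) * (k2 : ℂ)) * w2 + (k2 : ℂ) ^ 2 * w1) /
          (lam ^ 2 - ((ε * ν : ℝ) : ℂ) * ((k1 : ℂ) ^ 2 + (k2 : ℂ) ^ 2)) = 0) :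
    (∀ t x1 x2 z : ℝ,
      deriv (fun s => Wbl1 ε ν μ k1 k2 lam w1 w2 t s x2 z) x1 +
        deriv (fun s => Wbl2 ε ν μ k1 k2 lam w1 w2 t x1 s z) x2 +
        deriv (fun s => Wbl3 ε ν μ k1 k2 lam w1 w2 t x1 x2 s) z = 0) ∧
    (∃ ph : ℂ, ∀ t x1 x2 z : ℝ,
      (deriv (fun s => Wbl1 ε ν μ k1 k2 lam w1 w2 s x1 x2 z) t +
          ((1 / ε : ℝ) : ℂ) * (-(Wbl2 ε ν μ k1 k2 lam w1 w2 t x1 x2 z)) +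
          deriv (fun s => ph * BLE ε ν μ k1 k2 lam t s x2 z) x1 -
          (deriv (deriv (fun s => Wbl1 ε ν μ k1 k2 lam w1 w2 t s x2 z)) x1 +
            deriv (deriv (fun s => Wbl1 ε ν μ k1 k2 lam w1 w2 t x1 s z)) x2) -
          (ν : ℂ) * deriv (deriv (fun s => Wbl1 ε ν μ k1 k2 lam w1 w2 t x1 x2 s)) z = 0) ∧
      (deriv (fun s => Wbl2 ε ν μ k1 k2 lam w1 w2 s x1 x2 z) t +
          ((1 / ε : ℝ) : ℂ) * (Wbl1 ε ν μ k1 k2 lam w1 w2 t x1 x2 z) +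
          deriv (fun s => ph * BLE ε ν μ k1 k2 lam t x1 s z) x2 -
          (deriv (deriv (fun s => Wbl2 ε ν μ k1 k2 lam w1 w2 t s x2 z)) x1 +
            deriv (deriv (fun s => Wbl2 ε ν μ k1 k2 lam w1 w2 t x1 s z)) x2) -
          (ν : ℂ) * deriv (deriv (fun s => Wbl2 ε ν μ k1 k2 lam w1 w2 t x1 x2 s)) z = 0) ∧
      (deriv (fun s => Wbl3 ε ν μ k1 k2 lam w1 w2 s x1 x2 z) t +
          deriv (fun s => ph * BLE ε ν μ k1 k2 lam t x1 x2 s) z -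
          (deriv (deriv (fun s => Wbl3 ε ν μ k1 k2 lam w1 w2 t s x2 z)) x1 +
            deriv (deriv (fun s => Wbl3 ε ν μ k1 k2 lam w1 w2 t x1 s z)) x2) -
          (ν : ℂ) * deriv (deriv (fun s => Wbl3 ε ν μ k1 k2 lam w1 w2 t x1 x2 s)) z = 0)) := by
  have hεν : 0 < ε * ν := mul_pos hε hν
  have hσ : ((√(ε * ν) : ℝ) : ℂ) ≠ 0 := by exact_mod_cast (Real.sqrt_pos.2 hεν).ne'
  have hσ2 : ((√(ε * ν) : ℝ) : ℂ) ^ 2 = ε * ν := by exact_mod_cast Real.sq_sqrt hεν.le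
  have hlam0 : lam ≠ 0 := by rintro rfl; simp at hlam
  have hD := sub_ne_zero.2 hlam2
  push_cast at hw1 hw2 hD
  rw [← I_mul_blPressure_fst] at hw1
  rw [← I_mul_blPressure_snd] at hw2
  have hp := mul_sub_eq_I_mul_blPressure (w1 := w1) (w2 := w2) hD
  refine ⟨fun t x1 x2 z => ?_, blPressure ε ν k1 k2 lam w1 w2, fun t x1 x2 z => ⟨?_, ?_, ?_⟩⟩ <;>
    simp only [Wbl1, Wbl2, Wbl3, deriv_const_mul_BLE_t, deriv_const_mul_BLE_x1,
      deriv_const_mul_BLE_x2, deriv_const_mul_BLE_z] <;>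
    push_cast
  · linear_combination BLE ε ν μ k1 k2 lam t x1 x2 z *
      div_symbol_eq_zero (k1 := k1) (k2 := k2) (w1 := w1) (w2 := w2) hσ hlam0
  · linear_combination BLE ε ν μ k1 k2 lam t x1 x2 z * momentum_symbol_fst_eq_zero hσ hσ2 hw1
  · linear_combination BLE ε ν μ k1 k2 lam t x1 x2 z * momentum_symbol_snd_eq_zero hσ hσ2 hw2
  · linear_combination BLE ε ν μ k1 k2 lam t x1 x2 z *
      momentum_symbol_vert_eq_zero hσ hσ2 hlam0 hw1 hw2 hp
end
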